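/- Let n be a natural number, ω ∈ ℂ, and let q, p : ℝ → Matrix (Fin n) (Fin n) ℂ be differentiable functions satisfying q'(t) = p(t) and p'(t) = −ω²·q(t) for all t. Define the 2n×2n block matrices L(t) = fromBlocks (p t) (ω·q t) (ω·q t) (−p t) and M = fromBlocks 0 (−(ω/2)·1) ((ω/2)·1) 0. Then for all t, L'(t) = M·L(t) − L(t)·M. -/

import Mathlib

/-! `L(P, Q)` is linear in `(P, Q)`, so along a solution `L' = L(p', q') = L(-ω²q, p)`.
On the other hand, a block computation gives `[M, L(P, Q)] = L(-ω²Q, P)` for all `P, Q`: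
commuting with `M` realises the oscillator's vector field `(P, Q) ↦ (-ω²Q, P)`. -/

/-- The Lax matrix `L = [[p, ωq],[ωq, −p]]` of the matrix harmonic oscillator. -/
noncomputable def laxL (n : ℕ) (ω : ℂ) (P Q : Matrix (Fin n) (Fin n) ℂ) :
    Matrix (Fin n ⊕ Fin n) (Fin n ⊕ Fin n) ℂ :=
  Matrix.fromBlocks P (ω • Q) (ω • Q) (-P)

/-- The matrix `M = [[0, −(ω/2)1],[(ω/2)1, 0]]` of the harmonic-oscillator Lax pair. -/
noncomputable def laxM (n : ℕ) (ω : ℂ) : Matrix (Fin n ⊕ Fin n) (Fin n ⊕ Fin n) ℂ :=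
  Matrix.fromBlocks 0 ((-(ω / 2)) • 1) ((ω / 2) • 1) 0

open Matrix

section
variable {𝕜 F : Type*} [NontriviallyNormedField 𝕜] [NormedAddCommGroup F] [NormedSpace 𝕜 F]
  {l m n o : Type*} {t : 𝕜}

theorem Matrix.hasDerivAt_fromBlocks_apply {A : 𝕜 → Matrix n l F} {B : 𝕜 → Matrix n m F}
    {C : 𝕜 → Matrix o l F} {D : 𝕜 → Matrix o m F} {A' : Matrix n l F} {B' : Matrix n m F}
    {C' : Matrix o l F} {D' : Matrix o m F}
    (hA : ∀ i j, HasDerivAt (fun s => A s i j) (A' i j) t)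
    (hB : ∀ i j, HasDerivAt (fun s => B s i j) (B' i j) t)
    (hC : ∀ i j, HasDerivAt (fun s => C s i j) (C' i j) t)
    (hD : ∀ i j, HasDerivAt (fun s => D s i j) (D' i j) t) :
    ∀ a b, HasDerivAt (fun s => fromBlocks (A s) (B s) (C s) (D s) a b)
      (fromBlocks A' B' C' D' a b) t := by
  rintro (i | i) (j | j)
  exacts [hA i j, hB i j, hC i j, hD i j]

end

theorem hasDerivAt_laxL_apply {n : ℕ} (ω : ℂ) {P Q : ℝ → Matrix (Fin n) (Fin n) ℂ}
    {P' Q' : Matrix (Fin n) (Fin n) ℂ} {t : ℝ}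
    (hP : ∀ i j, HasDerivAt (fun s => P s i j) (P' i j) t)
    (hQ : ∀ i j, HasDerivAt (fun s => Q s i j) (Q' i j) t) :
    ∀ a b, HasDerivAt (fun s => laxL n ω (P s) (Q s) a b) (laxL n ω P' Q' a b) t := by
  have hωQ : ∀ i j, HasDerivAt (fun s => (ω • Q s) i j) ((ω • Q') i j) t := fun i j =>
    (hQ i j).const_smul ω
  exact hasDerivAt_fromBlocks_apply hP hωQ hωQ fun i j => (hP i j).neg

theorem laxM_mul_sub_mul_laxM (n : ℕ) (ω : ℂ) (P Q : Matrix (Fin n) (Fin n) ℂ) :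
    laxM n ω * laxL n ω P Q - laxL n ω P Q * laxM n ω = laxL n ω (-(ω ^ 2) • Q) P := by
  simp only [laxM, laxL, fromBlocks_multiply, sub_eq_add_neg, fromBlocks_neg, fromBlocks_add]
  congr 1 <;> simp only [Matrix.zero_mul, Matrix.mul_zero, Matrix.smul_mul, Matrix.mul_smul,
    Matrix.one_mul, Matrix.mul_one, Matrix.mul_neg] <;> module

/-- Lax representation `L̇ = [M, L]` for the matrix harmonic oscillator: if
`q' = p` and `p' = −ω²q` (entrywise derivatives), then `L' = M·L − L·M`. -/
theorem harmonic_oscillator_lax (n : ℕ) (ω : ℂ)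
    (q p : ℝ → Matrix (Fin n) (Fin n) ℂ)
    (hq : ∀ (t : ℝ) (i j : Fin n), HasDerivAt (fun s => q s i j) (p t i j) t)
    (hp : ∀ (t : ℝ) (i j : Fin n),
      HasDerivAt (fun s => p s i j) (((-(ω ^ 2)) • q t) i j) t) :
    ∀ (t : ℝ) (a b : Fin n ⊕ Fin n),
      HasDerivAt (fun s => laxL n ω (p s) (q s) a b)
        ((laxM n ω * laxL n ω (p t) (q t) - laxL n ω (p t) (q t) * laxM n ω) a b) t := by
  intro t
  rw [laxM_mul_sub_mul_laxM]
  exact hasDerivAt_laxL_apply ω (hp t) (hq t)
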